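/- For q-series, the operator θF = q·dF/dq satisfies the identity 3·θE₄ = E₂·E₄ − E₆, where E₂(q) = 1 − 24∑_{n≥1} σ₁(n)qⁿ, E₄(q) = 1 + 240∑_{n≥1} σ₃(n)qⁿ, E₆(q) = 1 − 504∑_{n≥1} σ₅(n)qⁿ as formal power series. -/

import Mathlib

/-!
Comparing coefficients, the identity amounts to
`240 ∑_{i+j=n} σ₁(i) σ₃(j) = 21 σ₅(n) + 10 σ₃(n) - σ₁(n) - 30 n σ₃(n)`, and the left side is
`240 ∑ a b³` over the positive solutions of `a x + b y = n`, evaluated by Liouville's method.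
For a weight `f a b`, the symmetry `(a, b, x, y) ↦ (b, a, y, x)` folds the sum onto the region
`a < b` plus the diagonal `a = b`, while the shear `(a, b, x, y) ↦ (a, b - a, x + y, y)`, which
maps `a < b` onto `y < x`, folds it onto `a < b` plus the diagonal `x = y`. Splitting `a b³` into
two parts folded in these two ways, the off-diagonal contributions cancel; the two diagonals are
divisor sums, evaluated with Faulhaber's formulas.
-/

/-- Sum of the `r`-th powers of the positive divisors of `n`, as a rational. -/
noncomputable def sigmaQ (r n : ℕ) : ℚ := ∑ d ∈ n.divisors, (d : ℚ) ^ r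

/-- The Eisenstein series `E₂ = 1 - 24 ∑ σ₁(n) qⁿ` as a formal power series. -/
noncomputable def E2 : PowerSeries ℚ :=
  PowerSeries.mk fun n => if n = 0 then 1 else -24 * sigmaQ 1 n

/-- The Eisenstein series `E₄ = 1 + 240 ∑ σ₃(n) qⁿ` as a formal power series. -/
noncomputable def E4 : PowerSeries ℚ :=
  PowerSeries.mk fun n => if n = 0 then 1 else 240 * sigmaQ 3 n

/-- The Eisenstein series `E₆ = 1 - 504 ∑ σ₅(n) qⁿ` as a formal power series. -/
noncomputable def E6 : PowerSeries ℚ :=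
  PowerSeries.mk fun n => if n = 0 then 1 else -504 * sigmaQ 5 n

/-- The operator `θF = q·dF/dq`, sending `∑ aₙ qⁿ` to `∑ n aₙ qⁿ`. -/
noncomputable def theta (F : PowerSeries ℚ) : PowerSeries ℚ :=
  PowerSeries.mk fun n => (n : ℚ) * PowerSeries.coeff n F

open Finset

lemma sum_filter_trichotomy {α β M : Type*} [AddCommMonoid M] [LinearOrder β] (s : Finset α)
    (u v : α → β) (f : α → M) :
    ∑ q ∈ s, f q = ∑ q ∈ s with u q < v q, f q + ∑ q ∈ s with u q = v q, f q
      + ∑ q ∈ s with v q < u q, f q := by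
  simp only [sum_filter, ← sum_add_distrib]
  refine sum_congr rfl fun q _ => ?_
  rcases lt_trichotomy (u q) (v q) with h | h | h
  · simp [h, h.ne, h.not_gt]
  · simp [h]
  · simp [h, h.ne', h.not_gt]

lemma sum_filter_comp_of_involutive {α M : Type*} [AddCommMonoid M] {s : Finset α}
    {e : α → α} (he : Function.Involutive e) (hs : ∀ q, e q ∈ s ↔ q ∈ s) (p : α → Prop)
    [DecidablePred p] (F : α → M) : ∑ q ∈ s with p q, F q = ∑ q ∈ s with p (e q), F (e q) :=
  sum_nbij' e e (by simp [hs, he _]) (by simp [hs]) (fun q _ => he q) (fun q _ => he q)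
    (by simp [he _])

/-- The positive solutions `(a, b, x, y)` of `a * x + b * y = n`. -/
def quadruples (n : ℕ) : Finset (ℕ × ℕ × ℕ × ℕ) :=
  (Icc 1 n ×ˢ Icc 1 n ×ˢ Icc 1 n ×ˢ Icc 1 n).filter
    fun q => q.1 * q.2.2.1 + q.2.1 * q.2.2.2 = n

lemma mem_quadruples {n a b x y : ℕ} :
    (a, b, x, y) ∈ quadruples n ↔ 0 < a ∧ 0 < b ∧ 0 < x ∧ 0 < y ∧ a * x + b * y = n := by
  simp only [quadruples, mem_filter, mem_product, mem_Icc]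
  constructor
  · omega
  · rintro ⟨ha, hb, hx, hy, rfl⟩
    refine ⟨⟨⟨ha, ?_⟩, ⟨hb, ?_⟩, ⟨hx, ?_⟩, hy, ?_⟩, rfl⟩ <;> nlinarith

lemma swap_mem_quadruples {n a b x y : ℕ} :
    (b, a, y, x) ∈ quadruples n ↔ (a, b, x, y) ∈ quadruples n := by
  simp only [mem_quadruples, add_comm (b * y)]
  tauto

lemma mem_quadruples_comm {n a b x y : ℕ} :
    (x, y, a, b) ∈ quadruples n ↔ (a, b, x, y) ∈ quadruples n := by
  simp only [mem_quadruples, mul_comm x, mul_comm y]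
  tauto

section

variable {M : Type*} [AddCommMonoid M] (n : ℕ)

lemma sum_quadruples_shear (F : ℕ × ℕ × ℕ × ℕ → M) :
    ∑ q ∈ quadruples n with q.1 < q.2.1, F (q.1, q.2.1 - q.1, q.2.2.1 + q.2.2.2, q.2.2.2)
      = ∑ q ∈ quadruples n with q.2.2.2 < q.2.2.1, F q := by
  refine sum_nbij' (fun q => (q.1, q.2.1 - q.1, q.2.2.1 + q.2.2.2, q.2.2.2))
    (fun q => (q.1, q.1 + q.2.1, q.2.2.1 - q.2.2.2, q.2.2.2)) ?_ ?_ ?_ ?_ (fun _ _ => rfl)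
  · rintro ⟨a, b, x, y⟩ hq
    simp only [mem_filter, mem_quadruples] at hq ⊢
    obtain ⟨⟨ha, hb, hx, hy, rfl⟩, hab⟩ := hq
    obtain ⟨k, rfl⟩ := Nat.exists_eq_add_of_lt hab
    refine ⟨⟨ha, by omega, by omega, hy, ?_⟩, by omega⟩
    rw [show a + k + 1 - a = k + 1 by omega]
    ring
  · rintro ⟨a, b, x, y⟩ hq
    simp only [mem_filter, mem_quadruples] at hq ⊢
    obtain ⟨⟨ha, hb, hx, hy, rfl⟩, hxy⟩ := hq
    obtain ⟨k, rfl⟩ := Nat.exists_eq_add_of_lt hxy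
    refine ⟨⟨ha, by omega, by omega, hy, ?_⟩, by omega⟩
    rw [show y + k + 1 - y = k + 1 by omega]
    ring
  · rintro ⟨a, b, x, y⟩ hq
    simp only [mem_filter, mem_quadruples, Prod.mk.injEq, and_true, true_and] at hq ⊢
    omega
  · rintro ⟨a, b, x, y⟩ hq
    simp only [mem_filter, mem_quadruples, Prod.mk.injEq, and_true, true_and] at hq ⊢
    omega

lemma sum_quadruples_x_eq_y (F : ℕ × ℕ × ℕ × ℕ → M) :
    ∑ q ∈ quadruples n with q.2.2.1 = q.2.2.2, F q
      = ∑ p ∈ n.divisorsAntidiagonal, ∑ c ∈ Ioo 0 p.1, F (c, p.1 - c, p.2, p.2) := by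
  rw [sum_sigma']
  refine sum_nbij' (fun q => ⟨(q.1 + q.2.1, q.2.2.1), q.1⟩)
    (fun s => (s.2, s.1.1 - s.2, s.1.2, s.1.2)) ?_ ?_ ?_ ?_ ?_
  · rintro ⟨a, b, x, y⟩ hq
    simp only [mem_filter, mem_quadruples] at hq
    obtain ⟨⟨ha, hb, hx, hy, rfl⟩, rfl⟩ := hq
    simp only [mem_sigma, Nat.mem_divisorsAntidiagonal, mem_Ioo]
    refine ⟨⟨by ring, by positivity⟩, ha, by omega⟩
  · rintro ⟨⟨d, e⟩, c⟩ hs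
    simp only [mem_sigma, Nat.mem_divisorsAntidiagonal, mem_Ioo] at hs
    obtain ⟨⟨rfl, hn⟩, hc, hcd⟩ := hs
    obtain ⟨k, rfl⟩ := Nat.exists_eq_add_of_lt hcd
    have he : 0 < e := Nat.pos_of_ne_zero (right_ne_zero_of_mul hn)
    simp only [mem_filter, mem_quadruples, and_true]
    refine ⟨hc, by omega, he, he, ?_⟩
    rw [show c + k + 1 - c = k + 1 by omega]
    ring
  · rintro ⟨a, b, x, y⟩ hq
    simp only [mem_filter, mem_quadruples] at hq
    simp only [Prod.mk.injEq, true_and]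
    omega
  · rintro ⟨⟨d, e⟩, c⟩ hs
    simp only [mem_sigma, Nat.mem_divisorsAntidiagonal, mem_Ioo] at hs
    simp only [Sigma.mk.injEq, Prod.mk.injEq, heq_eq_eq, and_true]
    omega
  · rintro ⟨a, b, x, y⟩ hq
    simp only [mem_filter] at hq
    simp only [hq.2, Nat.add_sub_cancel_left]

variable (f : ℕ → ℕ → M)

lemma sum_quadruples_trichotomy_ab :
    ∑ q ∈ quadruples n, f q.1 q.2.1
      = ∑ q ∈ quadruples n with q.1 < q.2.1, (f q.1 q.2.1 + f q.2.1 q.1)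
        + ∑ p ∈ n.divisorsAntidiagonal, ∑ _c ∈ Ioo 0 p.1, f p.2 p.2 := by
  have hgt : ∑ q ∈ quadruples n with q.2.1 < q.1, f q.1 q.2.1
      = ∑ q ∈ quadruples n with q.1 < q.2.1, f q.2.1 q.1 :=
    sum_filter_comp_of_involutive (e := fun q => (q.2.1, q.1, q.2.2.2, q.2.2.1)) (fun _ => rfl)
      (fun _ => swap_mem_quadruples) _ _
  have hdiag : ∑ q ∈ quadruples n with q.1 = q.2.1, f q.1 q.2.1
      = ∑ p ∈ n.divisorsAntidiagonal, ∑ _c ∈ Ioo 0 p.1, f p.2 p.2 := by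
    rw [sum_filter_comp_of_involutive (e := fun q => (q.2.2.1, q.2.2.2, q.1, q.2.1))
      (fun _ => rfl) (fun _ => mem_quadruples_comm), sum_quadruples_x_eq_y]
  rw [sum_filter_trichotomy _ (·.1) (·.2.1), hgt, hdiag, sum_add_distrib]
  abel

lemma sum_quadruples_trichotomy_xy :
    ∑ q ∈ quadruples n, f q.1 q.2.1
      = ∑ q ∈ quadruples n with q.1 < q.2.1, (f q.1 (q.2.1 - q.1) + f (q.2.1 - q.1) q.1)
        + ∑ p ∈ n.divisorsAntidiagonal, ∑ c ∈ Ioo 0 p.1, f c (p.1 - c) := by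
  have hgt : ∑ q ∈ quadruples n with q.2.2.2 < q.2.2.1, f q.1 q.2.1
      = ∑ q ∈ quadruples n with q.1 < q.2.1, f q.1 (q.2.1 - q.1) :=
    (sum_quadruples_shear n fun q => f q.1 q.2.1).symm
  have hlt : ∑ q ∈ quadruples n with q.2.2.1 < q.2.2.2, f q.1 q.2.1
      = ∑ q ∈ quadruples n with q.1 < q.2.1, f (q.2.1 - q.1) q.1 := by
    rw [sum_filter_comp_of_involutive (e := fun q => (q.2.1, q.1, q.2.2.2, q.2.2.1))
      (fun _ => rfl) (fun _ => swap_mem_quadruples)]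
    exact (sum_quadruples_shear n fun q => f q.2.1 q.1).symm
  rw [sum_filter_trichotomy _ (·.2.2.1) (·.2.2.2), hlt, hgt, sum_quadruples_x_eq_y,
    sum_add_distrib]
  abel

end

lemma sum_antidiagonal_sum_divisors_mul_eq_sum_quadruples {R : Type*} [CommSemiring R]
    (f g : ℕ → R) (n : ℕ) :
    ∑ p ∈ antidiagonal n, (∑ d ∈ p.1.divisors, f d) * (∑ d ∈ p.2.divisors, g d)
      = ∑ q ∈ quadruples n, f q.1 * g q.2.1 := by
  simp only [← Nat.sum_divisorsAntidiagonal (fun d _ => f d),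
    ← Nat.sum_divisorsAntidiagonal (fun d _ => g d), sum_mul_sum, sum_sigma']
  refine sum_nbij' (fun s => (s.2.1.1, s.2.2.1, s.2.1.2, s.2.2.2))
    (fun q => ⟨(q.1 * q.2.2.1, q.2.1 * q.2.2.2), (q.1, q.2.2.1), (q.2.1, q.2.2.2)⟩)
    ?_ ?_ ?_ ?_ (fun _ _ => rfl)
  · rintro ⟨⟨i, j⟩, ⟨a, x⟩, ⟨b, y⟩⟩ hs
    simp only [mem_sigma, HasAntidiagonal.mem_antidiagonal, Nat.mem_divisorsAntidiagonal] at hs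
    obtain ⟨rfl, ⟨rfl, hi⟩, ⟨rfl, hj⟩⟩ := hs
    simp only [mul_ne_zero_iff] at hi hj
    dsimp only
    rw [mem_quadruples]
    omega
  · rintro ⟨a, b, x, y⟩ hq
    rw [mem_quadruples] at hq
    obtain ⟨ha, hb, hx, hy, rfl⟩ := hq
    simp only [mem_sigma, HasAntidiagonal.mem_antidiagonal, Nat.mem_divisorsAntidiagonal,
      true_and]
    exact ⟨by positivity, by positivity⟩
  · rintro ⟨⟨i, j⟩, ⟨a, x⟩, ⟨b, y⟩⟩ hs
    simp only [mem_sigma, HasAntidiagonal.mem_antidiagonal, Nat.mem_divisorsAntidiagonal] at hs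
    obtain ⟨-, ⟨rfl, -⟩, ⟨rfl, -⟩⟩ := hs
    rfl
  · rintro ⟨a, b, x, y⟩ _
    rfl

lemma sum_divisorsAntidiagonal_fst_pow (r n : ℕ) :
    ∑ p ∈ n.divisorsAntidiagonal, (p.1 : ℚ) ^ r = sigmaQ r n :=
  Nat.sum_divisorsAntidiagonal fun d _ => (d : ℚ) ^ r

lemma sum_divisorsAntidiagonal_snd_pow (r n : ℕ) :
    ∑ p ∈ n.divisorsAntidiagonal, (p.2 : ℚ) ^ r = sigmaQ r n :=
  Nat.sum_divisorsAntidiagonal' fun _ e => (e : ℚ) ^ r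

/-- `a * b ^ 3 = abPart a b + xyPart a b`, split so that
`abPart a b + abPart b a = -(a² - ab + b²)² / 4` and `xyPart a c + xyPart c a = (a² + ac + c²)² / 4`
cancel when `b = a + c`. -/
def abPart (a b : ℚ) : ℚ := a * b ^ 3 / 2 - b ^ 4 / 4 - 3 * a ^ 2 * b ^ 2 / 8

def xyPart (a b : ℚ) : ℚ := a * b ^ 3 / 2 + b ^ 4 / 4 + 3 * a ^ 2 * b ^ 2 / 8

lemma abPart_add_xyPart (a b : ℚ) : abPart a b + xyPart a b = a * b ^ 3 := by
  unfold abPart xyPart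
  ring

lemma abPart_symm_add_xyPart_symm_eq_zero (a b : ℚ) :
    abPart a b + abPart b a + (xyPart a (b - a) + xyPart (b - a) a) = 0 := by
  unfold abPart xyPart
  ring

lemma sum_divisorsAntidiagonal_abPart (n : ℕ) :
    ∑ p ∈ n.divisorsAntidiagonal, ∑ _c ∈ Ioo 0 p.1, abPart p.2 p.2
      = (sigmaQ 4 n - n * sigmaQ 3 n) / 8 := by
  have hterm : ∀ p ∈ n.divisorsAntidiagonal,
      ∑ _c ∈ Ioo 0 p.1, abPart p.2 p.2 = ((p.2 : ℚ) ^ 4 - n * (p.2 : ℚ) ^ 3) / 8 := by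
    rintro ⟨d, e⟩ hp
    obtain ⟨rfl, hde⟩ := Nat.mem_divisorsAntidiagonal.1 hp
    have hd : 1 ≤ d := Nat.one_le_iff_ne_zero.2 (left_ne_zero_of_mul hde)
    rw [sum_const, Nat.card_Ioo, nsmul_eq_mul, Nat.sub_zero, Nat.cast_sub hd]
    unfold abPart
    push_cast
    ring
  rw [sum_congr rfl hterm, ← sum_div, sum_sub_distrib, ← mul_sum,
    sum_divisorsAntidiagonal_snd_pow, sum_divisorsAntidiagonal_snd_pow]

lemma sum_range_xyPart (d : ℕ) :
    ∑ c ∈ range d, xyPart c ((d - c : ℕ) : ℚ)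
      = 7 / 80 * d ^ 5 + d ^ 4 / 8 + d ^ 3 / 24 - d / 240 := by
  -- `c ^ 1` so that `sum_range_pow` applies to every power sum
  have hexpand : ∀ c ∈ range d, xyPart c ((d - c : ℕ) : ℚ)
      = (d : ℚ) ^ 4 / 4 - (d : ℚ) ^ 3 / 2 * c ^ 1 + 3 * (d : ℚ) ^ 2 / 8 * c ^ 2
        - (d : ℚ) / 4 * c ^ 3 + 1 / 8 * c ^ 4 := by
    intro c hc
    rw [Nat.cast_sub (mem_range.1 hc).le]
    unfold xyPart
    ring
  rw [sum_congr rfl hexpand]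
  simp only [sum_add_distrib, sum_sub_distrib, ← mul_sum, sum_const, card_range, nsmul_eq_mul]
  simp only [sum_range_pow, sum_range_succ, sum_range_zero]
  norm_num [bernoulli, bernoulli'_two, bernoulli'_three, bernoulli'_four, Nat.choose]
  ring

lemma sum_Ioo_xyPart (d : ℕ) :
    ∑ c ∈ Ioo 0 d, xyPart c ((d - c : ℕ) : ℚ)
      = 7 / 80 * d ^ 5 - d ^ 4 / 8 + d ^ 3 / 24 - d / 240 := by
  rcases d.eq_zero_or_pos with rfl | hd
  · simp
  have := sum_range_xyPart d
  rw [range_eq_Ico, ← Ioo_insert_left hd, sum_insert left_notMem_Ioo] at this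
  unfold xyPart at this ⊢
  push_cast at this
  linear_combination this

lemma sum_divisorsAntidiagonal_xyPart (n : ℕ) :
    ∑ p ∈ n.divisorsAntidiagonal, ∑ c ∈ Ioo 0 p.1, xyPart c ((p.1 - c : ℕ) : ℚ)
      = 7 / 80 * sigmaQ 5 n - sigmaQ 4 n / 8 + sigmaQ 3 n / 24 - sigmaQ 1 n / 240 := by
  simp only [sum_Ioo_xyPart, sum_sub_distrib, sum_add_distrib, ← mul_sum, ← sum_div,
    sum_divisorsAntidiagonal_fst_pow, ← sum_divisorsAntidiagonal_fst_pow 1, pow_one]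

lemma sum_quadruples_mul_pow_three (n : ℕ) :
    ∑ q ∈ quadruples n, (q.1 : ℚ) * (q.2.1 : ℚ) ^ 3
      = 7 / 80 * sigmaQ 5 n + sigmaQ 3 n / 24 - sigmaQ 1 n / 240 - n * sigmaQ 3 n / 8 := by
  have hcancel : ∑ q ∈ quadruples n with q.1 < q.2.1, (abPart q.1 q.2.1 + abPart q.2.1 q.1)
      + ∑ q ∈ quadruples n with q.1 < q.2.1,
        (xyPart q.1 ((q.2.1 - q.1 : ℕ) : ℚ) + xyPart ((q.2.1 - q.1 : ℕ) : ℚ) q.1) = 0 := by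
    rw [← sum_add_distrib]
    refine sum_eq_zero fun q hq => ?_
    rw [Nat.cast_sub (mem_filter.1 hq).2.le]
    exact abPart_symm_add_xyPart_symm_eq_zero _ _
  simp only [← abPart_add_xyPart, sum_add_distrib]
  rw [sum_quadruples_trichotomy_ab n fun a b => abPart a b,
    sum_quadruples_trichotomy_xy n fun a b => xyPart a b,
    sum_divisorsAntidiagonal_abPart, sum_divisorsAntidiagonal_xyPart]
  linear_combination hcancel

lemma sigmaQ_zero (r : ℕ) : sigmaQ r 0 = 0 := by
  simp [sigmaQ]

open PowerSeries

lemma E2_eq : E2 = 1 - C 24 * mk (sigmaQ 1) := by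
  ext n
  rcases eq_or_ne n 0 with rfl | hn <;> simp [E2, coeff_one, sigmaQ_zero, *]

lemma E4_eq : E4 = 1 + C 240 * mk (sigmaQ 3) := by
  ext n
  rcases eq_or_ne n 0 with rfl | hn <;> simp [E4, coeff_one, sigmaQ_zero, *]

lemma E6_eq : E6 = 1 - C 504 * mk (sigmaQ 5) := by
  ext n
  rcases eq_or_ne n 0 with rfl | hn <;> simp [E6, coeff_one, sigmaQ_zero, *]

lemma theta_E4 : theta E4 = C 240 * mk fun n => n * sigmaQ 3 n := by
  ext n
  simp only [theta, E4_eq, coeff_mk, map_add, coeff_one, coeff_C_mul]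
  split_ifs with hn
  · simp [hn]
  · ring

lemma mk_sigmaQ_one_mul_mk_sigmaQ_three :
    mk (sigmaQ 1) * mk (sigmaQ 3)
      = mk fun n => ∑ q ∈ quadruples n, (q.1 : ℚ) * (q.2.1 : ℚ) ^ 3 := by
  ext n
  simp only [coeff_mul, coeff_mk, sigmaQ, pow_one]
  exact sum_antidiagonal_sum_divisors_mul_eq_sum_quadruples _ _ n

theorem three_theta_E4 : 3 * theta E4 = E2 * E4 - E6 := by
  have hrhs : E2 * E4 - E6 = C 240 * mk (sigmaQ 3) - C 24 * mk (sigmaQ 1) + C 504 * mk (sigmaQ 5)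
      - C (24 * 240) * (mk (sigmaQ 1) * mk (sigmaQ 3)) := by
    rw [E2_eq, E4_eq, E6_eq, map_mul]
    ring
  rw [hrhs, theta_E4, mk_sigmaQ_one_mul_mk_sigmaQ_three, ← map_ofNat C 3]
  ext n
  simp only [coeff_C_mul, map_sub, map_add, coeff_mk, sum_quadruples_mul_pow_three]
  ring
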